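/- For 0 < λ < 1, the formula K(√λ) = (1/π) ∫_0^1 K(√(1−μ))/((1 − λμ)·√μ) dμ holds, where K(k) = ∫_0^{π/2} (1 − k² sin²θ)^{-1/2} dθ. -/

import Mathlib

open Real

/-- The complete elliptic integral of the first kind. -/
noncomputable def K (k : ℝ) : ℝ := ∫ θ in (0:ℝ)..(π/2), 1 / Real.sqrt (1 - k^2 * Real.sin θ ^ 2)

open MeasureTheory Set Filter Topology

/-! Writing `K √(1 - μ) = ∫₀^{π/2} dθ / √(cos²θ + μ sin²θ)`, the right-hand side is a double
integral of a positive function, so by Tonelli the `μ`-integral may be done first. The substitution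
`μ = cos²θ u² / (1 - sin²θ u²)` turns it into `∫₀¹ 2 du / (1 - (sin²θ + λ cos²θ) u²)`. Swapping
back, the `θ`-integral is the elementary `∫₀^{π/2} dθ / (a cos²θ + b sin²θ) = π / (2 √(a b))` with
`a = 1 - λ u²`, `b = 1 - u²`, which leaves `π ∫₀¹ du / √((1 - u²)(1 - λ u²)) = π K √λ`
(substitute `u = sin θ`). -/

section Tonelli

variable {α β : Type*} [MeasurableSpace α] [MeasurableSpace β] {μ : Measure α} {ν : Measure β}

theorem integral_integral_eq_toReal_lintegral_lintegral [SFinite ν] {f : α → β → ℝ}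
    (hf : AEStronglyMeasurable (Function.uncurry f) (μ.prod ν))
    (hf₀ : ∀ᵐ x ∂μ, ∀ᵐ y ∂ν, 0 ≤ f x y) (hint : ∀ᵐ x ∂μ, Integrable (f x) ν) :
    ∫ x, ∫ y, f x y ∂ν ∂μ = (∫⁻ x, ∫⁻ y, ENNReal.ofReal (f x y) ∂ν ∂μ).toReal := by
  rw [integral_eq_lintegral_of_nonneg_ae _ (f := fun x => ∫ y, f x y ∂ν) hf.integral_prod_right']
  · congr 1
    refine lintegral_congr_ae ?_
    filter_upwards [hf₀, hint] with x hx₀ hx using ofReal_integral_eq_lintegral_ofReal hx hx₀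
  · filter_upwards [hf₀] with x hx₀ using integral_nonneg_of_ae hx₀

theorem integral_integral_swap_of_nonneg [SFinite μ] [SFinite ν] {f : α → β → ℝ}
    (hf : AEStronglyMeasurable (Function.uncurry f) (μ.prod ν))
    (hf₀ : 0 ≤ᵐ[μ.prod ν] Function.uncurry f)
    (hx : ∀ᵐ x ∂μ, Integrable (f x) ν) (hy : ∀ᵐ y ∂ν, Integrable (fun x => f x y) μ) :
    ∫ x, ∫ y, f x y ∂ν ∂μ = ∫ y, ∫ x, f x y ∂μ ∂ν := by
  have hf₀' : ∀ᵐ z ∂ν.prod μ, 0 ≤ f z.2 z.1 :=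
    (Measure.measurePreserving_swap (μ := ν) (ν := μ)).quasiMeasurePreserving.ae hf₀
  rw [integral_integral_eq_toReal_lintegral_lintegral hf (Measure.ae_ae_of_ae_prod hf₀) hx,
    integral_integral_eq_toReal_lintegral_lintegral hf.prod_swap
      (Measure.ae_ae_of_ae_prod hf₀') hy,
    lintegral_lintegral_swap hf.aemeasurable.ennreal_ofReal]

theorem setIntegral_setIntegral_swap_of_nonneg [SFinite μ] [SFinite ν] {f : α → β → ℝ}
    {s : Set α} {t : Set β}
    (hs : MeasurableSet s) (ht : MeasurableSet t) (hf : Measurable (Function.uncurry f))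
    (hf₀ : ∀ x ∈ s, ∀ y ∈ t, 0 ≤ f x y) (hx : ∀ x ∈ s, IntegrableOn (f x) t ν)
    (hy : ∀ y ∈ t, IntegrableOn (fun x => f x y) s μ) :
    ∫ x in s, ∫ y in t, f x y ∂ν ∂μ = ∫ y in t, ∫ x in s, f x y ∂μ ∂ν := by
  refine integral_integral_swap_of_nonneg hf.aestronglyMeasurable ?_
    (ae_restrict_of_forall_mem hs hx) (ae_restrict_of_forall_mem ht hy)
  rw [Measure.prod_restrict]
  exact ae_restrict_of_forall_mem (hs.prod ht) fun p hp => hf₀ p.1 hp.1 p.2 hp.2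

end Tonelli

theorem StrictMonoOn.image_Ioo_of_continuousOn {α δ : Type*} [ConditionallyCompleteLinearOrder α]
    [TopologicalSpace α] [OrderTopology α] [DenselyOrdered α] [LinearOrder δ] [TopologicalSpace δ]
    [OrderClosedTopology δ] {f : α → δ} {a b : α} (hab : a ≤ b) (hmono : StrictMonoOn f (Icc a b))
    (hf : ContinuousOn f (Icc a b)) : f '' Ioo a b = Ioo (f a) (f b) := by
  refine Subset.antisymm ?_ (intermediate_value_Ioo hab hf)
  rintro _ ⟨x, hx, rfl⟩
  exact ⟨hmono (left_mem_Icc.2 hab) (Ioo_subset_Icc_self hx) hx.1,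
    hmono (Ioo_subset_Icc_self hx) (right_mem_Icc.2 hab) hx.2⟩

section ChangeOfVariables

variable {f f' g h : ℝ → ℝ} {a b c d : ℝ}

theorem integrableOn_Ioo_iff_of_strictMonoOn (hab : a ≤ b) (hmono : StrictMonoOn f (Icc a b))
    (hf : ContinuousOn f (Icc a b)) (hfa : f a = c) (hfb : f b = d)
    (hf' : ∀ x ∈ Ioo a b, HasDerivAt f (f' x) x) (hgh : ∀ x ∈ Ioo a b, |f' x| * g (f x) = h x) :
    IntegrableOn g (Ioo c d) ↔ IntegrableOn h (Ioo a b) := by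
  rw [← hfa, ← hfb, ← hmono.image_Ioo_of_continuousOn hab hf,
    integrableOn_image_iff_integrableOn_abs_deriv_smul measurableSet_Ioo
      (fun x hx => (hf' x hx).hasDerivWithinAt) (hmono.mono Ioo_subset_Icc_self).injOn]
  exact integrableOn_congr_fun hgh measurableSet_Ioo

theorem setIntegral_Ioo_eq_of_strictMonoOn (hab : a ≤ b) (hmono : StrictMonoOn f (Icc a b))
    (hf : ContinuousOn f (Icc a b)) (hfa : f a = c) (hfb : f b = d)
    (hf' : ∀ x ∈ Ioo a b, HasDerivAt f (f' x) x) (hgh : ∀ x ∈ Ioo a b, |f' x| * g (f x) = h x) :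
    ∫ y in Ioo c d, g y = ∫ x in Ioo a b, h x := by
  rw [← hfa, ← hfb, ← hmono.image_Ioo_of_continuousOn hab hf,
    integral_image_eq_integral_abs_deriv_smul measurableSet_Ioo
      (fun x hx => (hf' x hx).hasDerivWithinAt) (hmono.mono Ioo_subset_Icc_self).injOn]
  exact setIntegral_congr_fun measurableSet_Ioo hgh

end ChangeOfVariables

theorem cos_pos_of_mem_Ioo_zero_pi_div_two {θ : ℝ} (hθ : θ ∈ Ioo 0 (π / 2)) : 0 < cos θ :=
  cos_pos_of_mem_Ioo ⟨by linarith [hθ.1, pi_pos], hθ.2⟩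

theorem mul_cos_sq_add_mul_sin_sq_pos {a b : ℝ} (ha : 0 < a) (hb : 0 < b) (θ : ℝ) :
    0 < a * cos θ ^ 2 + b * sin θ ^ 2 := by
  rcases le_total a b with h | h <;>
    nlinarith [sin_sq_add_cos_sq θ, sq_nonneg (sin θ), sq_nonneg (cos θ)]

theorem hasDerivAt_arctan_mul_tan_div {a b x : ℝ} (ha : 0 < a) (hb : 0 < b) (hx : cos x ≠ 0) :
    HasDerivAt (fun x => arctan (√b * tan x / √a) / (√a * √b))
      (1 / (a * cos x ^ 2 + b * sin x ^ 2)) x := by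
  refine ((((hasDerivAt_tan hx).const_mul √b).div_const √a).arctan.div_const _).congr_deriv ?_
  have hsa : √a ^ 2 = a := sq_sqrt ha.le
  have hsb : √b ^ 2 = b := sq_sqrt hb.le
  have := mul_cos_sq_add_mul_sin_sq_pos ha hb x
  rw [tan_eq_sin_div_cos]
  field_simp
  rw [hsa, hsb]
  ring

theorem integral_one_div_mul_cos_sq_add_mul_sin_sq {a b : ℝ} (ha : 0 < a) (hb : 0 < b) :
    ∫ θ in 0..(π / 2), 1 / (a * cos θ ^ 2 + b * sin θ ^ 2) = π / (2 * √(a * b)) := by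
  set F : ℝ → ℝ := fun x => arctan (√b * tan x / √a) / (√a * √b)
  have hcont : Continuous fun θ => 1 / (a * cos θ ^ 2 + b * sin θ ^ 2) :=
    continuous_const.div (by fun_prop) fun θ => (mul_cos_sq_add_mul_sin_sq_pos ha hb θ).ne'
  have hF₀ : Tendsto F (𝓝[>] 0) (𝓝 0) := by
    have : ContinuousAt F 0 := by
      have := continuousAt_tan.mpr (cos_zero.trans_ne one_ne_zero)
      fun_prop
    simpa [F] using this.tendsto.mono_left nhdsWithin_le_nhds
  have hF₁ : Tendsto F (𝓝[<] (π / 2)) (𝓝 (π / 2 / (√a * √b))) :=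
    ((tendsto_arctan_atTop.mono_right nhdsWithin_le_nhds).comp
      ((tendsto_tan_pi_div_two.const_mul_atTop (sqrt_pos.2 hb)).atTop_div_const
        (sqrt_pos.2 ha))).div_const _
  rw [intervalIntegral.integral_eq_sub_of_hasDerivAt_of_tendsto (by positivity)
    (fun x hx => hasDerivAt_arctan_mul_tan_div ha hb
      (cos_pos_of_mem_Ioo_zero_pi_div_two hx).ne') (hcont.intervalIntegrable _ _) hF₀ hF₁,
    sqrt_mul ha.le]
  ring

theorem K_eq_setIntegral_Ioo (k : ℝ) :
    K k = ∫ θ in Ioo 0 (π / 2), 1 / √(1 - k ^ 2 * sin θ ^ 2) := by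
  rw [K, intervalIntegral.integral_of_le (by positivity), integral_Ioc_eq_integral_Ioo]

theorem K_eq_setIntegral_Ioo_zero_one (k : ℝ) :
    K k = ∫ u in Ioo 0 1, 1 / √((1 - u ^ 2) * (1 - k ^ 2 * u ^ 2)) := by
  rw [K_eq_setIntegral_Ioo]
  refine (setIntegral_Ioo_eq_of_strictMonoOn
    (g := fun u => 1 / √((1 - u ^ 2) * (1 - k ^ 2 * u ^ 2)))
    (h := fun θ => 1 / √(1 - k ^ 2 * sin θ ^ 2)) (by positivity)
    (strictMonoOn_sin.mono (Icc_subset_Icc (by linarith [pi_pos]) le_rfl))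
    continuous_sin.continuousOn sin_zero sin_pi_div_two (fun θ _ => hasDerivAt_sin θ)
    fun θ hθ => ?_).symm
  rw [← cos_sq', sqrt_mul (sq_nonneg _), sqrt_sq_eq_abs, mul_one_div, ← div_div,
    div_self (abs_pos.2 (cos_pos_of_mem_Ioo_zero_pi_div_two hθ).ne').ne']

theorem K_sqrt_one_sub {μ : ℝ} (hμ : μ ≤ 1) :
    K √(1 - μ) = ∫ θ in Ioo 0 (π / 2), 1 / √(cos θ ^ 2 + μ * sin θ ^ 2) := by
  rw [K_eq_setIntegral_Ioo, sq_sqrt (sub_nonneg.2 hμ)]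
  refine setIntegral_congr_fun measurableSet_Ioo fun θ _ => ?_
  rw [show 1 - (1 - μ) * sin θ ^ 2 = cos θ ^ 2 + μ * sin θ ^ 2 by
    linear_combination -cos_sq_add_sin_sq θ]

theorem one_sub_mul_sq_pos {m u : ℝ} (hm : m < 1) (hu : u ∈ Icc (0 : ℝ) 1) : 0 < 1 - m * u ^ 2 := by
  have : u ^ 2 ≤ 1 := by nlinarith [hu.1, hu.2]
  rcases le_total 0 m with h | h <;> nlinarith [sq_nonneg u]

theorem integrableOn_two_div_one_sub_mul_sq {m : ℝ} (hm : m < 1) :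
    IntegrableOn (fun u => 2 / (1 - m * u ^ 2)) (Ioo 0 1) :=
  (ContinuousOn.integrableOn_Icc (continuousOn_const.div (by fun_prop)
    fun _ hu => (one_sub_mul_sq_pos hm hu).ne')).mono_set Ioo_subset_Icc_self

section SquareRatioSubstitution

/-! For `μ = a u² / (1 - b u²)` one has `a + μ b = a / (1 - b u²)`, so `√μ √(a + μ b)` is
the rational function `a u / (1 - b u²)`; when `a + b = 1` the substitution maps `(0, 1)` onto
itself. -/

variable {a b : ℝ}

theorem strictMonoOn_mul_sq_div_one_sub_mul_sq (ha : 0 < a) (hb : b < 1) :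
    StrictMonoOn (fun u => a * u ^ 2 / (1 - b * u ^ 2)) (Icc 0 1) := by
  intro u hu v hv huv
  rw [div_lt_div_iff₀ (one_sub_mul_sq_pos hb hu) (one_sub_mul_sq_pos hb hv)]
  nlinarith [mul_lt_mul_of_pos_left (pow_lt_pow_left₀ huv hu.1 two_ne_zero) ha]

theorem hasDerivAt_mul_sq_div_one_sub_mul_sq {u : ℝ} (hu : 1 - b * u ^ 2 ≠ 0) :
    HasDerivAt (fun u => a * u ^ 2 / (1 - b * u ^ 2)) (2 * a * u / (1 - b * u ^ 2) ^ 2) u := by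
  refine (((hasDerivAt_pow 2 u).const_mul a).div (((hasDerivAt_pow 2 u).const_mul b).const_sub 1)
    hu).congr_deriv ?_
  field_simp
  ring

theorem abs_deriv_mul_integrand_mul_sq_div_one_sub_mul_sq {l u : ℝ} (ha : 0 < a) (hb : b < 1)
    (hu : u ∈ Ioo (0 : ℝ) 1) :
    |2 * a * u / (1 - b * u ^ 2) ^ 2| *
        (1 / ((1 - l * (a * u ^ 2 / (1 - b * u ^ 2))) * √(a * u ^ 2 / (1 - b * u ^ 2)) *
          √(a + a * u ^ 2 / (1 - b * u ^ 2) * b))) =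
      2 / (1 - (b + l * a) * u ^ 2) := by
  set D := 1 - b * u ^ 2
  have hD : 0 < D := one_sub_mul_sq_pos hb (Ioo_subset_Icc_self hu)
  have hsqrt : √(a * u ^ 2 / D) * √(a + a * u ^ 2 / D * b) = a * u / D := by
    rw [← sqrt_mul (by positivity), ← sqrt_sq (by have := hu.1; positivity : 0 ≤ a * u / D)]
    congr 1
    field_simp
    ring
  have hl : 1 - l * (a * u ^ 2 / D) = (1 - (b + l * a) * u ^ 2) / D := by
    field_simp
    ring
  rw [abs_of_pos (by have := hu.1; positivity), mul_assoc (1 - _), hsqrt, hl]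
  have := hu.1.ne'
  field_simp

theorem continuousOn_mul_sq_div_one_sub_mul_sq (hb : b < 1) :
    ContinuousOn (fun u => a * u ^ 2 / (1 - b * u ^ 2)) (Icc 0 1) :=
  (continuousOn_const.mul (continuousOn_pow 2)).div (by fun_prop)
    fun _ hu => (one_sub_mul_sq_pos hb hu).ne'

theorem one_sq_div_one_sub_mul_one_sq (ha : 0 < a) (hab : a + b = 1) :
    a * 1 ^ 2 / (1 - b * 1 ^ 2) = 1 := by
  rw [one_pow, mul_one, mul_one, show 1 - b = a by linarith, div_self ha.ne']

theorem integrableOn_one_div_one_sub_mul_sqrt_sqrt {l : ℝ} (ha : 0 < a) (hab : a + b = 1)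
    (hl : l < 1) :
    IntegrableOn (fun μ => 1 / ((1 - l * μ) * √μ * √(a + μ * b))) (Ioo 0 1) := by
  have hb : b < 1 := by linarith
  refine (integrableOn_Ioo_iff_of_strictMonoOn
    (g := fun μ => 1 / ((1 - l * μ) * √μ * √(a + μ * b)))
    (h := fun u => 2 / (1 - (b + l * a) * u ^ 2)) (c := 0) (d := 1) zero_le_one
    (strictMonoOn_mul_sq_div_one_sub_mul_sq ha hb) (continuousOn_mul_sq_div_one_sub_mul_sq hb)
    (by simp) (one_sq_div_one_sub_mul_one_sq ha hab)
    (fun u hu => hasDerivAt_mul_sq_div_one_sub_mul_sq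
      (one_sub_mul_sq_pos hb (Ioo_subset_Icc_self hu)).ne')
    (fun u hu => abs_deriv_mul_integrand_mul_sq_div_one_sub_mul_sq ha hb hu)).2 ?_
  exact integrableOn_two_div_one_sub_mul_sq (by nlinarith)

theorem setIntegral_one_div_one_sub_mul_sqrt_sqrt {l : ℝ} (ha : 0 < a) (hab : a + b = 1) :
    ∫ μ in Ioo 0 1, 1 / ((1 - l * μ) * √μ * √(a + μ * b)) =
      ∫ u in Ioo 0 1, 2 / (1 - (b + l * a) * u ^ 2) := by
  have hb : b < 1 := by linarith
  exact setIntegral_Ioo_eq_of_strictMonoOn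
    (g := fun μ => 1 / ((1 - l * μ) * √μ * √(a + μ * b)))
    (h := fun u => 2 / (1 - (b + l * a) * u ^ 2)) (c := 0) (d := 1) zero_le_one
    (strictMonoOn_mul_sq_div_one_sub_mul_sq ha hb) (continuousOn_mul_sq_div_one_sub_mul_sq hb)
    (by simp) (one_sq_div_one_sub_mul_one_sq ha hab)
    (fun u hu => hasDerivAt_mul_sq_div_one_sub_mul_sq
      (one_sub_mul_sq_pos hb (Ioo_subset_Icc_self hu)).ne')
    (fun u hu => abs_deriv_mul_integrand_mul_sq_div_one_sub_mul_sq ha hb hu)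

end SquareRatioSubstitution

theorem setIntegral_two_div_one_sub_sin_sq_add_mul_cos_sq_mul_sq {l u : ℝ} (hl : l < 1)
    (hu : u ∈ Ioo (0 : ℝ) 1) :
    ∫ θ in Ioo 0 (π / 2), 2 / (1 - (sin θ ^ 2 + l * cos θ ^ 2) * u ^ 2) =
      π / √((1 - u ^ 2) * (1 - l * u ^ 2)) := by
  have ha : 0 < 1 - l * u ^ 2 := one_sub_mul_sq_pos hl (Ioo_subset_Icc_self hu)
  have hb : 0 < 1 - u ^ 2 := by nlinarith [hu.1, hu.2]
  have key := integral_one_div_mul_cos_sq_add_mul_sin_sq ha hb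
  rw [intervalIntegral.integral_of_le (by positivity), integral_Ioc_eq_integral_Ioo] at key
  calc ∫ θ in Ioo 0 (π / 2), 2 / (1 - (sin θ ^ 2 + l * cos θ ^ 2) * u ^ 2)
      = ∫ θ in Ioo 0 (π / 2),
          2 * (1 / ((1 - l * u ^ 2) * cos θ ^ 2 + (1 - u ^ 2) * sin θ ^ 2)) := by
        refine setIntegral_congr_fun measurableSet_Ioo fun θ _ => ?_
        rw [mul_one_div]
        congr 1
        linear_combination -cos_sq_add_sin_sq θ
    _ = π / √((1 - u ^ 2) * (1 - l * u ^ 2)) := by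
        rw [integral_const_mul, key, mul_comm (1 - u ^ 2)]
        field_simp

theorem setIntegral_K_sqrt_one_sub_div {l : ℝ} (hl : l < 1) :
    ∫ μ in Ioo 0 1, K √(1 - μ) / ((1 - l * μ) * √μ) =
      ∫ θ in Ioo 0 (π / 2), ∫ u in Ioo 0 1, 2 / (1 - (sin θ ^ 2 + l * cos θ ^ 2) * u ^ 2) := by
  have hlμ : ∀ μ ∈ Ioo (0 : ℝ) 1, 0 < 1 - l * μ := fun μ hμ => by nlinarith [hμ.1, hμ.2]
  calc ∫ μ in Ioo 0 1, K √(1 - μ) / ((1 - l * μ) * √μ)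
      = ∫ μ in Ioo 0 1, ∫ θ in Ioo 0 (π / 2),
          1 / ((1 - l * μ) * √μ * √(cos θ ^ 2 + μ * sin θ ^ 2)) := by
        refine setIntegral_congr_fun measurableSet_Ioo fun μ hμ => ?_
        rw [K_sqrt_one_sub hμ.2.le, ← integral_div]
        refine setIntegral_congr_fun measurableSet_Ioo fun θ _ => ?_
        rw [div_div, mul_comm]
    _ = ∫ θ in Ioo 0 (π / 2), ∫ μ in Ioo 0 1,
          1 / ((1 - l * μ) * √μ * √(cos θ ^ 2 + μ * sin θ ^ 2)) := by
        refine setIntegral_setIntegral_swap_of_nonneg measurableSet_Ioo measurableSet_Ioo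
          (measurable_const.div (by fun_prop)) (fun μ hμ θ _ => ?_) (fun μ hμ => ?_)
          (fun θ hθ => integrableOn_one_div_one_sub_mul_sqrt_sqrt
            (pow_pos (cos_pos_of_mem_Ioo_zero_pi_div_two hθ) 2) (cos_sq_add_sin_sq θ) hl)
        · exact div_nonneg zero_le_one
            (mul_nonneg (mul_nonneg (hlμ μ hμ).le (sqrt_nonneg _)) (sqrt_nonneg _))
        · have hd : ∀ θ, 0 < cos θ ^ 2 + μ * sin θ ^ 2 := fun θ => by
            simpa using mul_cos_sq_add_mul_sin_sq_pos one_pos hμ.1 θ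
          refine (ContinuousOn.integrableOn_Icc (continuousOn_const.div (by fun_prop)
            fun θ _ => ?_)).mono_set Ioo_subset_Icc_self
          exact (mul_pos (mul_pos (hlμ μ hμ) (sqrt_pos.2 hμ.1)) (sqrt_pos.2 (hd θ))).ne'
    _ = ∫ θ in Ioo 0 (π / 2), ∫ u in Ioo 0 1, 2 / (1 - (sin θ ^ 2 + l * cos θ ^ 2) * u ^ 2) :=
        setIntegral_congr_fun measurableSet_Ioo fun θ hθ =>
          setIntegral_one_div_one_sub_mul_sqrt_sqrt
            (pow_pos (cos_pos_of_mem_Ioo_zero_pi_div_two hθ) 2) (cos_sq_add_sin_sq θ)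

theorem setIntegral_setIntegral_two_div {l : ℝ} (h₀ : 0 ≤ l) (hl : l < 1) :
    ∫ θ in Ioo 0 (π / 2), ∫ u in Ioo 0 1, 2 / (1 - (sin θ ^ 2 + l * cos θ ^ 2) * u ^ 2) =
      π * K √l := by
  have hm : ∀ θ ∈ Ioo 0 (π / 2), sin θ ^ 2 + l * cos θ ^ 2 < 1 := fun θ hθ => by
    nlinarith [cos_sq_add_sin_sq θ, pow_pos (cos_pos_of_mem_Ioo_zero_pi_div_two hθ) 2]
  calc ∫ θ in Ioo 0 (π / 2), ∫ u in Ioo 0 1, 2 / (1 - (sin θ ^ 2 + l * cos θ ^ 2) * u ^ 2)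
      = ∫ u in Ioo 0 1, ∫ θ in Ioo 0 (π / 2), 2 / (1 - (sin θ ^ 2 + l * cos θ ^ 2) * u ^ 2) := by
        refine setIntegral_setIntegral_swap_of_nonneg measurableSet_Ioo measurableSet_Ioo
          (measurable_const.div (by fun_prop))
          (fun θ hθ u hu => (div_pos two_pos
            (one_sub_mul_sq_pos (hm θ hθ) (Ioo_subset_Icc_self hu))).le)
          (fun θ hθ => integrableOn_two_div_one_sub_mul_sq (hm θ hθ)) (fun u hu => ?_)
        have ha : 0 < 1 - l * u ^ 2 := one_sub_mul_sq_pos hl (Ioo_subset_Icc_self hu)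
        have hb : 0 < 1 - u ^ 2 := by nlinarith [hu.1, hu.2]
        refine (ContinuousOn.integrableOn_Icc (continuousOn_const.div (by fun_prop)
          fun θ _ => ?_)).mono_set Ioo_subset_Icc_self
        linarith [mul_cos_sq_add_mul_sin_sq_pos ha hb θ, cos_sq_add_sin_sq θ]
    _ = ∫ u in Ioo 0 1, π * (1 / √((1 - u ^ 2) * (1 - l * u ^ 2))) :=
        setIntegral_congr_fun measurableSet_Ioo fun u hu => by
          rw [setIntegral_two_div_one_sub_sin_sq_add_mul_cos_sq_mul_sq hl hu, mul_one_div]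
    _ = π * K √l := by
        rw [integral_const_mul, K_eq_setIntegral_Ioo_zero_one, sq_sqrt h₀]

theorem stmt_16 (l : ℝ) (h₀ : 0 < l) (h₁ : l < 1) :
    K (Real.sqrt l) =
      (1/π) * ∫ μ in (0:ℝ)..1, K (Real.sqrt (1 - μ)) / ((1 - l * μ) * Real.sqrt μ) := by
  rw [intervalIntegral.integral_of_le zero_le_one, integral_Ioc_eq_integral_Ioo,
    setIntegral_K_sqrt_one_sub_div h₁, setIntegral_setIntegral_two_div h₀.le h₁,
    ← mul_assoc, one_div_mul_cancel pi_ne_zero, one_mul]
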